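/- arXiv:0804.0316 — 3 statements merged into one kernel-verified Lean document; each statement's English description precedes it below -/
import Mathlib

section
/- Let F1 and F2 be finite subsets of ℤ² such that F1 is uniquely determined by its row and column sums, |F1| = |F2|, F1 ∩ F2 = ∅, and the error in the line sums equals 2α for a positive integer α. Then for every positive integer i, the i-th largest row sum of F1 (if F1 has at least i nonempty rows) is at most α/i; in particular, the number of rows containing elements of F1 is at most α, and likewise the number of columns containing elements of F1 is at most α. -/
/-- Number of elements of `F` in row `i` (points with first coordinate `i`). -/
def rowSum (F : Finset (ℤ × ℤ)) (i : ℤ) : ℕ := (F.filter (fun p => p.1 = i)).card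

/-- Number of elements of `F` in column `j` (points with second coordinate `j`). -/
def colSum (F : Finset (ℤ × ℤ)) (j : ℤ) : ℕ := (F.filter (fun p => p.2 = j)).card

/-- The total error in the line sums of `F` and `G`:
`∑ i |r_i(F) − r_i(G)| + ∑ j |c_j(F) − c_j(G)|`. -/
noncomputable def lineError (F G : Finset (ℤ × ℤ)) : ℤ :=
  (∑ᶠ i : ℤ, |(rowSum F i : ℤ) - (rowSum G i : ℤ)|) +
  (∑ᶠ j : ℤ, |(colSum F j : ℤ) - (colSum G j : ℤ)|)

/-- `F` is uniquely determined by its row and column sums. -/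
def UniquelyDetermined (F : Finset (ℤ × ℤ)) : Prop :=
  ∀ G : Finset (ℤ × ℤ),
    (∀ i, rowSum G i = rowSum F i) → (∀ j, colSum G j = colSum F j) → G = F

/-!
A uniquely determined set has no switching component, so its row supports form a chain ordered
by the row sums. Hence, for a row sum `r`, the `k` rows with sum at least `r` all contain the `r`
columns of a row with sum `r`, and every other row lies inside these columns. Counting the points
of a disjoint set of the same size in these rows and columns shows that such a `k × r` rectangle
costs at least `2 k r` in the line sums, so `k r ≤ α`. With `r` the `k`-th largest row sum this
is the bound on the row sums; with `r` the smallest, resp. the largest, row sum it bounds the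
number of rows, resp. of columns.
-/

open Finset

section Fibers

variable {α β : Type*} [DecidableEq β]

lemma two_mul_sum_le_sum_abs_of_sum_eq_zero {S U : Finset β} (hSU : S ⊆ U) (d : β → ℤ)
    (h0 : ∑ b ∈ U, d b = 0) : 2 * ∑ b ∈ S, d b ≤ ∑ b ∈ U, |d b| := by
  have hd := sum_sdiff hSU (f := d)
  have habs := sum_sdiff hSU (f := fun b => |d b|)
  have hS : ∑ b ∈ S, d b ≤ ∑ b ∈ S, |d b| := sum_le_sum fun b _ => le_abs_self _
  have hrest : ∑ b ∈ U \ S, -d b ≤ ∑ b ∈ U \ S, |d b| := sum_le_sum fun b _ => neg_le_abs _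
  rw [sum_neg_distrib] at hrest
  linarith

/-- Since `#F = #G`, the fibres of `f` outside `S` carry a deficit equal to the surplus over `S`. -/
lemma two_mul_card_filter_sub_le_finsum_abs (f : α → β) {F G : Finset α} (hFG : #F = #G)
    (S : Finset β) :
    2 * ((#{p ∈ F | f p ∈ S} : ℤ) - #{p ∈ G | f p ∈ S}) ≤
      ∑ᶠ b, |(#{p ∈ F | f p = b} : ℤ) - #{p ∈ G | f p = b}| := by
  set U := S ∪ (F.image f ∪ G.image f)
  have hfiber_sum : ∀ H : Finset α, H.image f ⊆ U →
      ∑ b ∈ U, (#{p ∈ H | f p = b} : ℤ) = #H := by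
    intro H hH
    rw [← Nat.cast_sum, sum_card_fiberwise_eq_card_filter, filter_true_of_mem]
    exact fun p hp => hH (mem_image_of_mem f hp)
  have hsupport :
      (Function.support fun b => |(#{p ∈ F | f p = b} : ℤ) - #{p ∈ G | f p = b}|) ⊆ U := by
    intro b hb
    by_contra hbU
    have hempty : ∀ H : Finset α, H.image f ⊆ U → #{p ∈ H | f p = b} = 0 := fun H hH =>
      card_eq_zero.2 (filter_eq_empty_iff.2 fun p hp hpb => hbU (hpb ▸ hH (mem_image_of_mem f hp)))
    simp [hempty F (by grind), hempty G (by grind)] at hb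
  rw [finsum_eq_sum_of_support_subset _ hsupport, mul_sub, ← sum_card_fiberwise_eq_card_filter,
    ← sum_card_fiberwise_eq_card_filter, Nat.cast_sum, Nat.cast_sum, ← mul_sub, ← sum_sub_distrib]
  refine two_mul_sum_le_sum_abs_of_sum_eq_zero subset_union_left _ ?_
  rw [sum_sub_distrib, hfiber_sum F (by grind), hfiber_sum G (by grind), hFG, sub_self]

end Fibers

lemma card_filter_fst_mem_add_card_filter_snd_mem {α β : Type*} [DecidableEq α] [DecidableEq β]
    (F : Finset (α × β)) (A : Finset α) (B : Finset β) :
    #{p ∈ F | p.1 ∈ A} + #{p ∈ F | p.2 ∈ B} = #{p ∈ F | p.1 ∈ A ∨ p.2 ∈ B} + #(F ∩ A ×ˢ B) := by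
  rw [filter_or, ← card_union_add_card_inter, ← filter_and]
  congr 2
  ext p
  simp only [mem_inter, mem_filter, mem_product]

/-- Counted in the rows `A` plus the columns `B`, `F` has `#F + #A * #B` points, whereas `G`, which
misses the rectangle, has at most `#G`. -/
lemma two_mul_card_mul_card_le_lineError {F G : Finset (ℤ × ℤ)} (hFG : #F = #G)
    (hdisj : Disjoint F G) {A B : Finset ℤ} (hAB : A ×ˢ B ⊆ F)
    (hcover : ∀ p ∈ F, p.1 ∉ A → p.2 ∈ B) :
    2 * ((#A : ℤ) * #B) ≤ lineError F G := by
  have hrows := two_mul_card_filter_sub_le_finsum_abs Prod.fst hFG A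
  have hcols := two_mul_card_filter_sub_le_finsum_abs Prod.snd hFG B
  have hF := card_filter_fst_mem_add_card_filter_snd_mem F A B
  rw [filter_true_of_mem fun p hp => (em _).imp_right (hcover p hp), inter_eq_right.2 hAB,
    card_product] at hF
  have hG := card_filter_fst_mem_add_card_filter_snd_mem G A B
  rw [disjoint_iff_inter_eq_empty.1 (disjoint_of_subset_left hAB hdisj).symm, card_empty,
    add_zero] at hG
  have hG_le : #{p ∈ G | p.1 ∈ A ∨ p.2 ∈ B} ≤ #G := card_filter_le _ _
  unfold lineError rowSum colSum
  zify at hF hG hFG hG_le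
  linarith

/-- A uniquely determined set has no switching component: otherwise replacing `(a, b), (c, d)`
by `(a, d), (c, b)` would give another set with the same line sums. -/
lemma UniquelyDetermined.mem_or_mem {F : Finset (ℤ × ℤ)} (hU : UniquelyDetermined F)
    {a b c d : ℤ} (hab : (a, b) ∈ F) (hcd : (c, d) ∈ F) : (a, d) ∈ F ∨ (c, b) ∈ F := by
  by_contra! ⟨had, hcb⟩
  set F' := (F.erase (a, b)).erase (c, d)
  have hcd' : (c, d) ∈ F.erase (a, b) := mem_erase.2 ⟨by grind, hcd⟩
  have hsumF (g : ℤ × ℤ → ℕ) : ∑ p ∈ F, g p = g (a, b) + (g (c, d) + ∑ p ∈ F', g p) := by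
    rw [← add_sum_erase _ _ hab, ← add_sum_erase _ _ hcd']
  have hsumG (g : ℤ × ℤ → ℕ) :
      ∑ p ∈ insert (a, d) (insert (c, b) F'), g p = g (a, d) + (g (c, b) + ∑ p ∈ F', g p) := by
    rw [sum_insert (by grind), sum_insert (by grind)]
  have hGF : insert (a, d) (insert (c, b) F') = F := by
    refine hU _ (fun i => ?_) (fun j => ?_)
    · simp only [rowSum, card_filter, hsumF, hsumG]
    · simp only [colSum, card_filter, hsumF, hsumG]
      ring
  exact had (hGF ▸ mem_insert_self _ _)

def rowSupp (F : Finset (ℤ × ℤ)) (a : ℤ) : Finset ℤ := {p ∈ F | p.1 = a}.image Prod.snd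

@[simp]
lemma mem_rowSupp {F : Finset (ℤ × ℤ)} {a b : ℤ} : b ∈ rowSupp F a ↔ (a, b) ∈ F := by
  simp [rowSupp]

lemma card_rowSupp (F : Finset (ℤ × ℤ)) (a : ℤ) : #(rowSupp F a) = rowSum F a :=
  card_image_of_injOn fun _ hp _ hq hpq =>
    Prod.ext ((mem_filter.1 hp).2.trans (mem_filter.1 hq).2.symm) hpq

/-- Without switching components, the row supports form a chain ordered by the row sums. -/
lemma UniquelyDetermined.rowSupp_subset_of_rowSum_le {F : Finset (ℤ × ℤ)}
    (hU : UniquelyDetermined F) {a c : ℤ} (h : rowSum F a ≤ rowSum F c) :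
    rowSupp F a ⊆ rowSupp F c := by
  by_contra hac
  obtain ⟨b, hba, hbc⟩ := not_subset.1 hac
  have hca : rowSupp F c ⊆ rowSupp F a := fun d hd =>
    mem_rowSupp.2 <| ((hU.mem_or_mem (mem_rowSupp.1 hba) (mem_rowSupp.1 hd)).resolve_right
      fun h => hbc (mem_rowSupp.2 h))
  have := card_lt_card (hca.ssubset_of_not_subset hac)
  rw [card_rowSupp, card_rowSupp] at this
  omega

/-- The rectangle: the rows with sum at least that of row `m`, times the support of row `m`. -/
lemma UniquelyDetermined.two_mul_card_mul_rowSum_le_lineError {F G : Finset (ℤ × ℤ)}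
    (hU : UniquelyDetermined F) (hFG : #F = #G) (hdisj : Disjoint F G) (m : ℤ) :
    2 * ((#{a ∈ F.image Prod.fst | rowSum F m ≤ rowSum F a} : ℤ) * rowSum F m) ≤
      lineError F G := by
  have hrect := two_mul_card_mul_card_le_lineError hFG hdisj
    (A := {a ∈ F.image Prod.fst | rowSum F m ≤ rowSum F a}) (B := rowSupp F m) ?_ ?_
  · rwa [card_rowSupp] at hrect
  · rintro ⟨a, b⟩ hp
    simp only [mem_product, mem_filter] at hp
    exact mem_rowSupp.1 (hU.rowSupp_subset_of_rowSum_le hp.1.2 hp.2)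
  · rintro ⟨a, b⟩ hp ha
    have hlt : rowSum F a ≤ rowSum F m := by
      by_contra! h
      exact ha (mem_filter.2 ⟨mem_image_of_mem _ hp, h.le⟩)
    exact hU.rowSupp_subset_of_rowSum_le hlt (mem_rowSupp.2 hp)

lemma List.Pairwise.succ_le_countP_le_getElem {α : Type*} [Preorder α] [DecidableLE α]
    {l : List α} (hl : l.Pairwise (· ≥ ·)) {i : ℕ} (hi : i < l.length) :
    i + 1 ≤ l.countP (l[i] ≤ ·) := by
  have htake : (l.take (i + 1)).countP (l[i] ≤ ·) = i + 1 := by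
    rw [List.countP_eq_length.2, List.length_take_of_le hi]
    intro x hx
    obtain ⟨j, hj, rfl⟩ := List.mem_take_iff_getElem.1 hx
    rcases Nat.lt_or_ge j i with hji | hji
    · simpa using List.pairwise_iff_getElem.1 hl j i (by omega) hi hji
    · simp [show j = i by omega]
  exact htake ▸ (List.take_sublist _ _).countP_le

lemma Finset.succ_le_card_filter_getElem_le {ι α : Type*} [Preorder α] [DecidableLE α]
    {s : Finset ι} {g : ι → α} {l : List α} (hl : (l : Multiset α) = s.val.map g)
    (hsorted : l.Pairwise (· ≥ ·)) {i : ℕ} (hi : i < l.length) :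
    i + 1 ≤ #{a ∈ s | l[i] ≤ g a} := by
  have := hsorted.succ_le_countP_le_getElem hi
  rwa [← Multiset.coe_countP, hl, Multiset.countP_map] at this

lemma rowSum_pos {F : Finset (ℤ × ℤ)} {a : ℤ} (ha : a ∈ F.image Prod.fst) : 0 < rowSum F a := by
  obtain ⟨p, hp, rfl⟩ := mem_image.1 ha
  exact card_pos.2 ⟨p, mem_filter.2 ⟨hp, rfl⟩⟩

section Bounds

variable {F G : Finset (ℤ × ℤ)} {α : ℕ}

lemma UniquelyDetermined.card_mul_rowSum_le (hU : UniquelyDetermined F) (hFG : #F = #G)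
    (hdisj : Disjoint F G) (herr : lineError F G = 2 * α) (m : ℤ) :
    #{a ∈ F.image Prod.fst | rowSum F m ≤ rowSum F a} * rowSum F m ≤ α := by
  have := hU.two_mul_card_mul_rowSum_le_lineError hFG hdisj m
  rw [herr] at this
  exact_mod_cast le_of_mul_le_mul_left this two_pos

lemma UniquelyDetermined.card_image_fst_le (hU : UniquelyDetermined F) (hFG : #F = #G)
    (hdisj : Disjoint F G) (herr : lineError F G = 2 * α) : #(F.image Prod.fst) ≤ α := by
  rcases (F.image Prod.fst).eq_empty_or_nonempty with hempty | hne
  · simp [hempty]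
  obtain ⟨m, hm, hmin⟩ := (F.image Prod.fst).exists_min_image (rowSum F) hne
  calc #(F.image Prod.fst) = #{a ∈ F.image Prod.fst | rowSum F m ≤ rowSum F a} := by
        rw [filter_true_of_mem hmin]
    _ ≤ _ * rowSum F m := Nat.le_mul_of_pos_right _ (rowSum_pos hm)
    _ ≤ α := hU.card_mul_rowSum_le hFG hdisj herr m

/-- The support of a row with maximal sum contains every column. -/
lemma UniquelyDetermined.card_image_snd_le (hU : UniquelyDetermined F) (hFG : #F = #G)
    (hdisj : Disjoint F G) (herr : lineError F G = 2 * α) : #(F.image Prod.snd) ≤ α := by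
  rcases (F.image Prod.fst).eq_empty_or_nonempty with hempty | hne
  · simp_all
  obtain ⟨m, hm, hmax⟩ := (F.image Prod.fst).exists_max_image (rowSum F) hne
  have hcols : F.image Prod.snd ⊆ rowSupp F m := by
    intro b hb
    obtain ⟨⟨a, b⟩, hp, rfl⟩ := mem_image.1 hb
    exact hU.rowSupp_subset_of_rowSum_le (hmax a (mem_image_of_mem _ hp)) (mem_rowSupp.2 hp)
  calc #(F.image Prod.snd) ≤ rowSum F m := card_rowSupp F m ▸ card_le_card hcols
    _ ≤ #{a ∈ F.image Prod.fst | rowSum F m ≤ rowSum F a} * rowSum F m :=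
      Nat.le_mul_of_pos_left _ (card_pos.2 ⟨m, mem_filter.2 ⟨hm, le_rfl⟩⟩)
    _ ≤ α := hU.card_mul_rowSum_le hFG hdisj herr m

end Bounds

theorem row_sums_bound_disjoint_general
    (F1 F2 : Finset (ℤ × ℤ))
    (hU : UniquelyDetermined F1)
    (hcard : F1.card = F2.card)
    (hdisj : F1 ∩ F2 = ∅)
    (α : ℕ)
    (herr : lineError F1 F2 = 2 * α)
    -- `l` is the list of the row sums of the nonempty rows of `F1`,
    -- in nonincreasing order
    (l : List ℕ)
    (hl : l = Multiset.sort ((F1.image Prod.fst).val.map (fun i => rowSum F1 i)) (· ≥ ·)) :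
    -- the `(i+1)`-st largest row sum is at most `α / (i+1)`
    (∀ (i : ℕ) (h : i < l.length), ((l.get ⟨i, h⟩ : ℝ)) ≤ (α : ℝ) / ((i : ℝ) + 1)) ∧
    -- the number of nonempty rows is at most `α`
    (F1.image Prod.fst).card ≤ α ∧
    -- the number of nonempty columns is at most `α`
    (F1.image Prod.snd).card ≤ α := by
  have hdisj' : Disjoint F1 F2 := disjoint_iff_inter_eq_empty.2 hdisj
  have hl_coe : (l : Multiset ℕ) = (F1.image Prod.fst).val.map (rowSum F1) :=
    hl ▸ Multiset.sort_eq _ _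
  have hsorted : l.Pairwise (· ≥ ·) := hl ▸ Multiset.pairwise_sort _ _
  refine ⟨fun i hi => ?_, hU.card_image_fst_le hcard hdisj' herr,
    hU.card_image_snd_le hcard hdisj' herr⟩
  obtain ⟨m, -, hm⟩ := Multiset.mem_map.1 (hl_coe ▸ Multiset.mem_coe.2 (List.getElem_mem hi))
  have hcount := succ_le_card_filter_getElem_le hl_coe hsorted hi
  rw [← hm] at hcount
  rw [List.get_eq_getElem, le_div_iff₀ (by positivity), ← hm, mul_comm]
  exact_mod_cast (Nat.mul_le_mul_right _ hcount).trans (hU.card_mul_rowSum_le hcard hdisj' herr m)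

theorem row_sums_bound_disjoint
    (F1 F2 : Finset (ℤ × ℤ))
    (hU : UniquelyDetermined F1)
    (hcard : F1.card = F2.card)
    (hdisj : F1 ∩ F2 = ∅)
    (α : ℕ) (hα : 0 < α)
    (herr : lineError F1 F2 = 2 * α)
    -- `l` is the list of the row sums of the nonempty rows of `F1`,
    -- in nonincreasing order
    (l : List ℕ)
    (hl : l = Multiset.sort ((F1.image Prod.fst).val.map (fun i => rowSum F1 i)) (· ≥ ·)) :
    -- the `(i+1)`-st largest row sum is at most `α / (i+1)`
    (∀ (i : ℕ) (h : i < l.length), ((l.get ⟨i, h⟩ : ℝ)) ≤ (α : ℝ) / ((i : ℝ) + 1)) ∧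
    -- the number of nonempty rows is at most `α`
    (F1.image Prod.fst).card ≤ α ∧
    -- the number of nonempty columns is at most `α`
    (F1.image Prod.snd).card ≤ α :=
  row_sums_bound_disjoint_general F1 F2 hU hcard hdisj α herr l hl
end

section
/- Let F1 and F2 be finite subsets of ℤ² such that F1 is uniquely determined by its row and column sums, |F1| = |F2|, and the error in the line sums equals 2α for a positive integer α. Let p = |F1 ∩ F2|. Then |F1| ≤ (α + p)(1 + log(α + p)), where log denotes the natural logarithm. -/
/-!
Uniqueness forbids switching components, so the rows of `F1` are nested: a row with smaller sum
occupies a subset of the columns of a row with larger sum. Fix a row `i₀` with sum `r`, let `I` be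
the rows with sum at least `r` and `J` the columns of row `i₀`. Then `I × J ⊆ F1` and every point of
`F1` lies in a row of `I` or a column of `J`, so counting `F1` and `F2` along these lines gives
`|I| r ≤ α + p`: as `|F1| = |F2|`, on any set of rows (columns) the line sums of `F1` exceed those of
`F2` by at most half of the row (column) error. Hence the `k`-th largest row sum is at most
`(α + p) / k`; as there are at most `α + p` rows, `|F1| ≤ (α + p) H_{α + p}`, and
`H_n ≤ 1 + log n`.
-/

open Finset

theorem two_nsmul_sum_le_sum_abs {ι M : Type*} [AddCommGroup M] [LinearOrder M]
    [IsOrderedAddMonoid M] [DecidableEq ι] {s t : Finset ι} (hts : t ⊆ s) {f : ι → M}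
    (hf : ∑ i ∈ s, f i = 0) : 2 • ∑ i ∈ t, f i ≤ ∑ i ∈ s, |f i| := by
  have hcompl : ∑ i ∈ t, f i = -∑ i ∈ s \ t, f i :=
    eq_neg_of_add_eq_zero_left (by rw [add_comm, sum_sdiff hts, hf])
  calc 2 • ∑ i ∈ t, f i = ∑ i ∈ t, f i + ∑ i ∈ s \ t, -f i := by
        rw [two_nsmul, sum_neg_distrib, ← hcompl]
    _ ≤ ∑ i ∈ t, |f i| + ∑ i ∈ s \ t, |f i| :=
        add_le_add (sum_le_sum fun i _ => le_abs_self _) (sum_le_sum fun i _ => neg_le_abs _)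
    _ = ∑ i ∈ s, |f i| := by rw [add_comm, sum_sdiff hts]

theorem two_mul_sum_card_fiber_sub_le {α β : Type*} [DecidableEq β] {F G : Finset α}
    (hFG : #F = #G) (π : α → β) (t : Finset β) :
    2 * ∑ b ∈ t, ((#{a ∈ F | π a = b} : ℤ) - #{a ∈ G | π a = b}) ≤
      ∑ᶠ b, |(#{a ∈ F | π a = b} : ℤ) - #{a ∈ G | π a = b}| := by
  classical
  set s := (F ∪ G).image π ∪ t
  have hF : (F : Set α).MapsTo π s := fun _ ha =>
    mem_union_left _ (mem_image_of_mem _ (mem_union_left _ ha))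
  have hG : (G : Set α).MapsTo π s := fun _ ha =>
    mem_union_left _ (mem_image_of_mem _ (mem_union_right _ ha))
  have hfib (H : Finset α) (hH : (H : Set α).MapsTo π s) (b : β) (hb : b ∉ s) :
      #{a ∈ H | π a = b} = 0 :=
    card_eq_zero.2 (filter_eq_empty_iff.2 fun a ha hab => hb (hab ▸ hH ha))
  rw [finsum_eq_sum_of_support_subset _ (s := s) fun b hb => by
    by_contra hbs
    simp [hfib F hF b hbs, hfib G hG b hbs] at hb]
  rw [two_mul, ← two_nsmul]
  refine two_nsmul_sum_le_sum_abs subset_union_right ?_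
  rw [sum_sub_distrib, ← Nat.cast_sum, ← Nat.cast_sum, ← card_eq_sum_card_fiberwise hF,
    ← card_eq_sum_card_fiberwise hG, hFG, sub_self]

theorem sum_sdiff_pair_union_pair_add {α M : Type*} [DecidableEq α] [AddCommMonoid M]
    {s : Finset α} {u v u' v' : α} (hu : u ∈ s) (hv : v ∈ s) (huv : u ≠ v) (hu' : u' ∉ s)
    (hv' : v' ∉ s) (huv' : u' ≠ v') (f : α → M) :
    ∑ x ∈ s \ {u, v} ∪ {u', v'}, f x + (f u + f v) = ∑ x ∈ s, f x + (f u' + f v') := by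
  have hdisj : Disjoint (s \ {u, v}) {u', v'} :=
    disjoint_left.2 fun x hx hx' => by
      rcases mem_insert.1 hx' with rfl | hx' <;> simp_all
  rw [sum_union hdisj, sum_pair huv', ← sum_pair huv, add_right_comm,
    sum_sdiff (insert_subset hu (singleton_subset_iff.2 hv))]

theorem UniquelyDetermined.mem_or_mem_s6 {F : Finset (ℤ × ℤ)} (hU : UniquelyDetermined F)
    {i i' j j' : ℤ} (h : (i, j) ∈ F) (h' : (i', j') ∈ F) : (i, j') ∈ F ∨ (i', j) ∈ F := by
  by_contra! ⟨hij', hi'j⟩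
  have hii' : i ≠ i' := by rintro rfl; exact hij' h'
  have hswitch (φ : ℤ × ℤ → ℕ) (hφ : φ (i, j) + φ (i', j') = φ (i, j') + φ (i', j)) :
      ∑ x ∈ F \ {(i, j), (i', j')} ∪ {(i, j'), (i', j)}, φ x = ∑ x ∈ F, φ x := by
    have := sum_sdiff_pair_union_pair_add h h' (by simp [hii']) hij' hi'j (by simp [hii']) φ
    omega
  have := hU (F \ {(i, j), (i', j')} ∪ {(i, j'), (i', j)})
    (fun x => by simp only [rowSum, card_filter]; exact hswitch _ (by ring))
    (fun x => by simp only [colSum, card_filter]; exact hswitch _ (by ring))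
  exact hij' (this ▸ by simp)

theorem exists_card_mul_le {ι : Type*} {f : ι → ℕ} {m : ℕ} {s : Finset ι} (hs : s.Nonempty)
    (h : ∀ i ∈ s, #{j ∈ s | f i ≤ f j} * f i ≤ m) : ∃ i ∈ s, #s * f i ≤ m := by
  obtain ⟨i, hi, hmin⟩ := s.exists_min_image f hs
  exact ⟨i, hi, filter_true_of_mem hmin ▸ h i hi⟩

theorem sum_le_mul_harmonic {ι : Type*} [DecidableEq ι] (f : ι → ℕ) (m : ℕ) (s : Finset ι)
    (h : ∀ i ∈ s, #{j ∈ s | f i ≤ f j} * f i ≤ m) :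
    ∑ i ∈ s, (f i : ℚ) ≤ m * harmonic #s := by
  induction s using Finset.strongInduction with
  | H s ih =>
    rcases s.eq_empty_or_nonempty with rfl | hs
    · simp
    obtain ⟨i, hi, hfi⟩ := exists_card_mul_le hs h
    obtain ⟨n, hn⟩ := Nat.exists_eq_add_one.2 hs.card_pos
    have hrest := ih (s.erase i) (erase_ssubset hi) fun j hj =>
      (Nat.mul_le_mul_right _ (card_le_card (filter_subset_filter _ (erase_subset i s)))).trans
        (h j (mem_of_mem_erase hj))
    rw [card_erase_of_mem hi, hn, add_tsub_cancel_right] at hrest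
    have hfi' : (f i : ℚ) ≤ m * (↑(n + 1))⁻¹ := by
      rw [← div_eq_mul_inv, le_div_iff₀ (by positivity), ← hn]
      exact_mod_cast (mul_comm _ _).trans_le hfi
    rw [← add_sum_erase s _ hi, hn, harmonic_succ, mul_add]
    linarith

theorem sum_le_mul_one_add_log {ι : Type*} [DecidableEq ι] (f : ι → ℕ) (m : ℕ) (s : Finset ι)
    (hpos : ∀ i ∈ s, 0 < f i) (h : ∀ i ∈ s, #{j ∈ s | f i ≤ f j} * f i ≤ m) :
    ∑ i ∈ s, (f i : ℝ) ≤ m * (1 + Real.log m) := by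
  have hlog : Real.log #s ≤ Real.log m := by
    rcases s.eq_empty_or_nonempty with rfl | hs
    · simpa using Real.log_natCast_nonneg m
    obtain ⟨i, hi, hfi⟩ := exists_card_mul_le hs h
    exact Real.log_le_log (by exact_mod_cast hs.card_pos)
      (by exact_mod_cast (Nat.le_mul_of_pos_right _ (hpos i hi)).trans hfi)
  calc ∑ i ∈ s, (f i : ℝ) = ((∑ i ∈ s, (f i : ℚ) : ℚ) : ℝ) := by push_cast; rfl
    _ ≤ ((m * harmonic #s : ℚ) : ℝ) := by exact_mod_cast sum_le_mul_harmonic f m s h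
    _ ≤ m * (1 + Real.log m) := by
      push_cast
      gcongr
      exact (harmonic_le_one_add_log _).trans (by linarith)

def row (F : Finset (ℤ × ℤ)) (x : ℤ) : Finset ℤ := (F.filter (·.1 = x)).image Prod.snd

@[simp]
theorem mem_row {F : Finset (ℤ × ℤ)} {x y : ℤ} : y ∈ row F x ↔ (x, y) ∈ F := by
  simp [row]

theorem card_row (F : Finset (ℤ × ℤ)) (x : ℤ) : #(row F x) = rowSum F x :=
  card_image_of_injOn fun _ hq _ hq' h =>
    Prod.ext ((mem_filter.1 hq).2.trans (mem_filter.1 hq').2.symm) h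

theorem UniquelyDetermined.mem_of_rowSum_le {F : Finset (ℤ × ℤ)} (hU : UniquelyDetermined F)
    {i i' j : ℤ} (hii' : rowSum F i ≤ rowSum F i') (hj : (i, j) ∈ F) : (i', j) ∈ F := by
  by_contra hj'
  have hsub : row F i' ⊆ (row F i).erase j := fun y hy => by
    rw [mem_row] at hy
    refine mem_erase.2 ⟨by rintro rfl; exact hj' hy, mem_row.2 ?_⟩
    exact (hU.mem_or_mem_s6 hj hy).resolve_right hj'
  have := card_le_card hsub
  rw [card_erase_of_mem (mem_row.2 hj), card_row, card_row] at this
  have : 0 < rowSum F i := card_row F i ▸ card_pos.2 ⟨j, mem_row.2 hj⟩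
  omega

theorem sum_rowSum_add_sum_colSum (F : Finset (ℤ × ℤ)) (I J : Finset ℤ) :
    ∑ i ∈ I, rowSum F i + ∑ j ∈ J, colSum F j =
      #{q ∈ F | q.1 ∈ I ∨ q.2 ∈ J} + #(F ∩ I ×ˢ J) := by
  have hinter : F ∩ I ×ˢ J = {q ∈ F | q.1 ∈ I ∧ q.2 ∈ J} := by ext; simp [mem_product]
  rw [hinter, filter_or, filter_and, card_union_add_card_inter]
  exact congrArg₂ (· + ·) (sum_card_fiberwise_eq_card_filter F I _)
    (sum_card_fiberwise_eq_card_filter F J _)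

theorem UniquelyDetermined.two_mul_card_mul_rowSum_le {F : Finset (ℤ × ℤ)}
    (hU : UniquelyDetermined F) {G : Finset (ℤ × ℤ)} (hFG : #F = #G) (i₀ : ℤ) :
    2 * ((#{i ∈ F.image Prod.fst | rowSum F i₀ ≤ rowSum F i} * rowSum F i₀ : ℕ) : ℤ) ≤
      lineError F G + 2 * #(F ∩ G) := by
  set I := {i ∈ F.image Prod.fst | rowSum F i₀ ≤ rowSum F i}
  have hIJ : I ×ˢ row F i₀ ⊆ F := fun ⟨x, y⟩ hq => by
    obtain ⟨hx, hy⟩ := mem_product.1 hq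
    exact hU.mem_of_rowSum_le (mem_filter.1 hx).2 (mem_row.1 hy)
  have hcover : ∀ q ∈ F, q.1 ∈ I ∨ q.2 ∈ row F i₀ := fun ⟨x, y⟩ hq => by
    by_cases hx : rowSum F i₀ ≤ rowSum F x
    · exact Or.inl (mem_filter.2 ⟨mem_image_of_mem _ hq, hx⟩)
    · exact Or.inr (mem_row.2 (hU.mem_of_rowSum_le (le_of_not_ge hx) hq))
  have hF := sum_rowSum_add_sum_colSum F I (row F i₀)
  rw [filter_true_of_mem hcover, inter_eq_right.2 hIJ, card_product, card_row] at hF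
  have hG := sum_rowSum_add_sum_colSum G I (row F i₀)
  have hG₁ := card_filter_le G fun q => q.1 ∈ I ∨ q.2 ∈ row F i₀
  have hG₂ : #(G ∩ I ×ˢ row F i₀) ≤ #(F ∩ G) :=
    card_le_card fun q hq => mem_inter.2 ⟨hIJ (mem_inter.1 hq).2, (mem_inter.1 hq).1⟩
  have hrows : 2 * ∑ i ∈ I, ((rowSum F i : ℤ) - rowSum G i) ≤
      ∑ᶠ i, |(rowSum F i : ℤ) - rowSum G i| := two_mul_sum_card_fiber_sub_le hFG Prod.fst I
  have hcols : 2 * ∑ j ∈ row F i₀, ((colSum F j : ℤ) - colSum G j) ≤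
      ∑ᶠ j, |(colSum F j : ℤ) - colSum G j| := two_mul_sum_card_fiber_sub_le hFG Prod.snd _
  rw [sum_sub_distrib] at hrows hcols
  unfold lineError
  push_cast at *
  linarith

theorem general_bound_log_general
    (F1 F2 : Finset (ℤ × ℤ))
    (hU : UniquelyDetermined F1)
    (hcard : F1.card = F2.card)
    (α : ℕ)
    (herr : lineError F1 F2 = 2 * α)
    (p : ℕ) (hp : p = (F1 ∩ F2).card) :
    (F1.card : ℝ) ≤ (α + p) * (1 + Real.log (α + p)) := by
  have hpos : ∀ i ∈ F1.image Prod.fst, 0 < rowSum F1 i := fun i hi => by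
    obtain ⟨q, hq, rfl⟩ := mem_image.1 hi
    exact card_pos.2 ⟨q, mem_filter.2 ⟨hq, rfl⟩⟩
  have hrows : ∀ i ∈ F1.image Prod.fst,
      #{j ∈ F1.image Prod.fst | rowSum F1 i ≤ rowSum F1 j} * rowSum F1 i ≤ α + p := fun i _ => by
    have := hU.two_mul_card_mul_rowSum_le hcard i
    rw [herr, ← hp] at this
    omega
  have hsum : (F1.card : ℝ) = ∑ i ∈ F1.image Prod.fst, (rowSum F1 i : ℝ) := by
    exact_mod_cast card_eq_sum_card_image Prod.fst F1
  rw [hsum]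
  exact_mod_cast sum_le_mul_one_add_log (rowSum F1) (α + p) _ hpos hrows

theorem general_bound_log
    (F1 F2 : Finset (ℤ × ℤ))
    (hU : UniquelyDetermined F1)
    (hcard : F1.card = F2.card)
    (α : ℕ) (hα : 0 < α)
    (herr : lineError F1 F2 = 2 * α)
    (p : ℕ) (hp : p = (F1 ∩ F2).card) :
    (F1.card : ℝ) ≤ (α + p) * (1 + Real.log (α + p)) :=
  general_bound_log_general F1 F2 hU hcard α herr p hp
end

section
/- For every integer m ≥ 1 there exist finite subsets F1 and F2 of ℤ² such that F1 is uniquely determined by its row and column sums, |F1| = |F2| = 2^m + m·2^{m−1}, F1 ∩ F2 = ∅, and the error in the line sums equals 2·2^m (i.e. α = 2^m, so that |F1| = α + (1/2)·α·log₂ α). -/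
/-!
With `Nat.size` the bit length, `F₁ = {(i, j) ∈ ℕ² : size i + size j ≤ m}` is cut out by an
additive inequality `a i + b j ≤ c`. If `G` has the line sums of `F₁`, the weight `a i + b j - c`
has the same total over `G` as over `F₁`; it is positive off `F₁` and nonpositive on `F₁`, so
`G ⊆ F₁`, and `|G| = |F₁|` gives `G = F₁`. Counting the `i < 2 ^ m` by bit length gives
`|F₁| = 2 ^ m + m 2 ^ (m - 1)`.

Row `i` of `F₁` is `[0, L i)` with `L i = 2 ^ (m - size i)`. For `0 < i < 2 ^ m`, `F₂` moves it to
the next dyadic block `[L i, 2 L i)`, i.e. onto `size i + size j = m + 1`; row `0` becomes the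
segment `[2 ^ m, 2 ^ m + 2 ^ (m - 1))` beyond `F₁`, and its transpose is added so that `F₂` stays
symmetric. The row sums then differ only in row `0`, by `2 ^ (m - 1)`, and in the `2 ^ (m - 1)` new
one-cell rows; by symmetry the columns contribute the same.
-/

open Finset

section LineSums

theorem sum_fst_eq_sum_rowSum (G : Finset (ℤ × ℤ)) {I : Finset ℤ} (hI : ∀ p ∈ G, p.1 ∈ I)
    (f : ℤ → ℤ) : ∑ p ∈ G, f p.1 = ∑ i ∈ I, (rowSum G i : ℤ) * f i := by
  rw [← sum_fiberwise_of_maps_to hI]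
  refine sum_congr rfl fun i _ => ?_
  rw [sum_congr rfl fun p hp => congrArg f (mem_filter.1 hp).2, sum_const, rowSum, nsmul_eq_mul]

theorem sum_snd_eq_sum_colSum (G : Finset (ℤ × ℤ)) {J : Finset ℤ} (hJ : ∀ p ∈ G, p.2 ∈ J)
    (g : ℤ → ℤ) : ∑ p ∈ G, g p.2 = ∑ j ∈ J, (colSum G j : ℤ) * g j := by
  rw [← sum_fiberwise_of_maps_to hJ]
  refine sum_congr rfl fun j _ => ?_
  rw [sum_congr rfl fun p hp => congrArg g (mem_filter.1 hp).2, sum_const, colSum, nsmul_eq_mul]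

theorem sum_add_eq_of_lineSums_eq {F G : Finset (ℤ × ℤ)} (hr : ∀ i, rowSum G i = rowSum F i)
    (hc : ∀ j, colSum G j = colSum F j) (f g : ℤ → ℤ) :
    ∑ p ∈ G, (f p.1 + g p.2) = ∑ p ∈ F, (f p.1 + g p.2) := by
  classical
  have hG : G ⊆ G ∪ F := subset_union_left
  have hF : F ⊆ G ∪ F := subset_union_right
  simp only [sum_add_distrib,
    sum_fst_eq_sum_rowSum G (fun p hp => mem_image_of_mem Prod.fst (hG hp)),
    sum_fst_eq_sum_rowSum F (fun p hp => mem_image_of_mem Prod.fst (hF hp)),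
    sum_snd_eq_sum_colSum G (fun p hp => mem_image_of_mem Prod.snd (hG hp)),
    sum_snd_eq_sum_colSum F (fun p hp => mem_image_of_mem Prod.snd (hF hp)), hr, hc]

theorem uniquelyDetermined_of_mem_iff_add_le {F : Finset (ℤ × ℤ)} (a b : ℤ → ℤ) (c : ℤ)
    (hF : ∀ p, p ∈ F ↔ a p.1 + b p.2 ≤ c) : UniquelyDetermined F := by
  classical
  intro G hr hc
  have hcard : #G = #F := by
    simpa using sum_add_eq_of_lineSums_eq hr hc (fun _ => 1) (fun _ => 0)
  set w : ℤ × ℤ → ℤ := fun p => a p.1 + b p.2 - c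
  have hw : ∑ p ∈ G, w p = ∑ p ∈ F, w p := by
    simp only [w, sum_sub_distrib, sum_add_eq_of_lineSums_eq hr hc a b, sum_const, hcard]
  have hGF : G ⊆ F := by
    by_contra hsub
    have hpos : 0 < ∑ p ∈ G \ F, w p :=
      sum_pos (fun p hp => by have := (hF p).not.1 (mem_sdiff.1 hp).2; simp only [w]; omega)
        (sdiff_nonempty.2 hsub)
    have hnonpos : ∑ p ∈ F \ G, w p ≤ 0 :=
      sum_nonpos fun p hp => by have := (hF p).1 (mem_sdiff.1 hp).1; simp only [w]; omega
    have := sum_sdiff_sub_sum_sdiff (s₁ := F) (s₂ := G) (f := w)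
    omega
  exact eq_of_subset_of_card_le hGF hcard.ge

theorem rowSum_eq_zero {F : Finset (ℤ × ℤ)} {i : ℤ} (h : ∀ p ∈ F, p.1 ≠ i) : rowSum F i = 0 :=
  card_eq_zero.2 (filter_eq_empty_iff.2 h)

theorem finsum_abs_sub_rowSum {F G : Finset (ℤ × ℤ)} {s : Finset ℤ} (hF : ∀ p ∈ F, p.1 ∈ s)
    (hG : ∀ p ∈ G, p.1 ∈ s) :
    ∑ᶠ i, |(rowSum F i : ℤ) - rowSum G i| = ∑ i ∈ s, |(rowSum F i : ℤ) - rowSum G i| := by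
  refine finsum_eq_sum_of_support_subset _ fun i hi => ?_
  by_contra his
  have hrow : ∀ H : Finset (ℤ × ℤ), (∀ p ∈ H, p.1 ∈ s) → rowSum H i = 0 :=
    fun H hH => rowSum_eq_zero fun p hp hpi => his (hpi ▸ hH p hp)
  simp [hrow F hF, hrow G hG] at hi

theorem colSum_eq_rowSum_of_swap_mem {F : Finset (ℤ × ℤ)} (h : ∀ p ∈ F, p.swap ∈ F) (i : ℤ) :
    colSum F i = rowSum F i :=
  card_nbij' Prod.swap Prod.swap
    (fun p hp => mem_filter.2 ⟨h p (mem_filter.1 hp).1, (mem_filter.1 hp).2⟩)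
    (fun p hp => mem_filter.2 ⟨h p (mem_filter.1 hp).1, (mem_filter.1 hp).2⟩)
    (fun _ _ => rfl) (fun _ _ => rfl)

theorem lineError_eq_of_swap_mem {F G : Finset (ℤ × ℤ)} (hF : ∀ p ∈ F, p.swap ∈ F)
    (hG : ∀ p ∈ G, p.swap ∈ G) :
    lineError F G = 2 * ∑ᶠ i, |(rowSum F i : ℤ) - rowSum G i| := by
  simp only [lineError, colSum_eq_rowSum_of_swap_mem hF, colSum_eq_rowSum_of_swap_mem hG]
  ring

end LineSums

section OfRows

def ofRows (R : Finset ℕ) (T : ℕ → Finset ℕ) : Finset (ℤ × ℤ) :=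
  R.biUnion fun i => (T i).image fun j : ℕ => ((i : ℤ), (j : ℤ))

variable {R : Finset ℕ} {T : ℕ → Finset ℕ}

theorem mem_ofRows {p : ℤ × ℤ} :
    p ∈ ofRows R T ↔ ∃ i ∈ R, ∃ j ∈ T i, ((i : ℤ), (j : ℤ)) = p := by
  simp only [ofRows, mem_biUnion, mem_image]

theorem natCast_mem_ofRows {i j : ℕ} : ((i : ℤ), (j : ℤ)) ∈ ofRows R T ↔ i ∈ R ∧ j ∈ T i := by
  simp only [mem_ofRows, Prod.mk.injEq, Nat.cast_inj]
  constructor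
  · rintro ⟨i, hi, j, hj, rfl, rfl⟩
    exact ⟨hi, hj⟩
  · rintro ⟨hi, hj⟩
    exact ⟨i, hi, j, hj, rfl, rfl⟩

theorem exists_eq_natCast_of_mem_ofRows {p : ℤ × ℤ} (hp : p ∈ ofRows R T) :
    ∃ i j : ℕ, p = ((i : ℤ), (j : ℤ)) := by
  obtain ⟨i, -, j, -, rfl⟩ := mem_ofRows.1 hp
  exact ⟨i, j, rfl⟩

theorem card_ofRows : #(ofRows R T) = ∑ i ∈ R, #(T i) := by
  rw [ofRows, card_biUnion]
  · exact sum_congr rfl fun i _ => card_image_of_injective _ fun j j' h => by simpa using h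
  · intro i _ i' _ hii'
    simp only [disjoint_left, mem_image]
    rintro _ ⟨j, -, rfl⟩ ⟨j', -, h⟩
    exact hii' (by simpa using congrArg Prod.fst h.symm)

theorem rowSum_ofRows_natCast (k : ℕ) :
    rowSum (ofRows R T) k = if k ∈ R then #(T k) else 0 := by
  have hrow : (ofRows R T).filter (·.1 = (k : ℤ)) = ofRows (R.filter (· = k)) T := by
    ext p
    simp only [mem_filter, mem_ofRows]
    constructor
    · rintro ⟨⟨i, hi, j, hj, rfl⟩, hik⟩
      exact ⟨i, ⟨hi, Nat.cast_injective hik⟩, j, hj, rfl⟩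
    · rintro ⟨i, ⟨hi, rfl⟩, j, hj, rfl⟩
      exact ⟨⟨i, hi, j, hj, rfl⟩, rfl⟩
  rw [rowSum, hrow, card_ofRows, sum_filter, sum_ite_eq']

theorem finsum_abs_sub_rowSum_ofRows {R' : Finset ℕ} {T' : ℕ → Finset ℕ} {N : ℕ}
    (hR : R ⊆ range N) (hR' : R' ⊆ range N) :
    ∑ᶠ i, |(rowSum (ofRows R T) i : ℤ) - rowSum (ofRows R' T') i| =
      ∑ k ∈ range N, |(rowSum (ofRows R T) k : ℤ) - rowSum (ofRows R' T') k| := by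
  have hrows : ∀ {R T}, R ⊆ range N → ∀ p ∈ ofRows R T, p.1 ∈ (range N).image (↑) := by
    intro R T hR p hp
    obtain ⟨i, hi, j, -, rfl⟩ := mem_ofRows.1 hp
    exact mem_image_of_mem _ (hR hi)
  rw [finsum_abs_sub_rowSum (hrows hR) (hrows hR'), sum_image fun _ _ _ _ h => by exact_mod_cast h]

end OfRows

theorem size_eq_of_mem_Ico_two_pow {m i : ℕ} (hi : i ∈ Ico (2 ^ m) (2 ^ (m + 1))) :
    i.size = m + 1 := by
  rw [mem_Ico] at hi
  exact le_antisymm (Nat.size_le.2 hi.2) (Nat.lt_size.2 hi.1)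

theorem sum_range_two_pow_size (f : ℕ → ℕ) (m : ℕ) :
    ∑ i ∈ range (2 ^ m), f i.size = f 0 + ∑ k ∈ range m, 2 ^ k * f (k + 1) := by
  induction m with
  | zero => simp
  | succ m ih =>
    have hblock : ∑ i ∈ Ico (2 ^ m) (2 ^ (m + 1)), f i.size = 2 ^ m * f (m + 1) := by
      rw [sum_congr rfl fun i hi => congrArg f (size_eq_of_mem_Ico_two_pow hi), sum_const,
        Nat.card_Ico, smul_eq_mul, pow_succ, Nat.mul_two, Nat.add_sub_cancel]
    rw [← sum_range_add_sum_Ico _ (Nat.pow_le_pow_right two_pos m.le_succ), ih, hblock,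
      sum_range_succ, add_assoc]

section BinaryStaircase

variable {m : ℕ}

def staircase (m : ℕ) : Finset (ℤ × ℤ) :=
  ofRows (range (2 ^ m)) fun i => range (2 ^ (m - i.size))

def staircasePartnerRow (m i : ℕ) : Finset ℕ :=
  if i = 0 then Ico (2 ^ m) (2 ^ m + 2 ^ (m - 1))
  else if i < 2 ^ m then Ico (2 ^ (m - i.size)) (2 * 2 ^ (m - i.size))
  else {0}

def staircasePartner (m : ℕ) : Finset (ℤ × ℤ) :=
  ofRows (range (2 ^ m + 2 ^ (m - 1))) (staircasePartnerRow m)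

theorem natCast_mem_staircase {i j : ℕ} :
    ((i : ℤ), (j : ℤ)) ∈ staircase m ↔ i.size + j.size ≤ m := by
  rw [staircase, natCast_mem_ofRows, mem_range, mem_range, ← Nat.size_le, ← Nat.size_le]
  omega

theorem natCast_mem_staircasePartner {i j : ℕ} :
    ((i : ℤ), (j : ℤ)) ∈ staircasePartner m ↔
      (i ≠ 0 ∧ j ≠ 0 ∧ i.size + j.size = m + 1) ∨
      (i = 0 ∧ 2 ^ m ≤ j ∧ j < 2 ^ m + 2 ^ (m - 1)) ∨
      (j = 0 ∧ 2 ^ m ≤ i ∧ i < 2 ^ m + 2 ^ (m - 1)) := by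
  have hi := @Nat.size_le i m
  have hi0 := @Nat.size_pos i
  have hj0 := @Nat.size_pos j
  have hjm := @Nat.lt_size m j
  have hH : 0 < 2 ^ (m - 1) := by positivity
  rw [staircasePartner, natCast_mem_ofRows, mem_range, staircasePartnerRow]
  split_ifs with h0 hlt
  · rw [mem_Ico]; omega
  · rw [mem_Ico, ← Nat.lt_size, ← pow_succ', ← Nat.size_le]; omega
  · rw [mem_singleton]; omega

theorem swap_mem_staircase {p : ℤ × ℤ} (hp : p ∈ staircase m) : p.swap ∈ staircase m := by
  obtain ⟨i, j, rfl⟩ := exists_eq_natCast_of_mem_ofRows hp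
  rw [natCast_mem_staircase] at hp
  exact natCast_mem_staircase.2 (by omega)

theorem swap_mem_staircasePartner {p : ℤ × ℤ} (hp : p ∈ staircasePartner m) :
    p.swap ∈ staircasePartner m := by
  obtain ⟨i, j, rfl⟩ := exists_eq_natCast_of_mem_ofRows hp
  rw [natCast_mem_staircasePartner] at hp
  exact natCast_mem_staircasePartner.2 (by omega)

theorem disjoint_staircase_staircasePartner : Disjoint (staircase m) (staircasePartner m) := by
  refine disjoint_left.2 fun p hp hp' => ?_
  obtain ⟨i, j, rfl⟩ := exists_eq_natCast_of_mem_ofRows hp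
  rw [natCast_mem_staircase] at hp
  rw [natCast_mem_staircasePartner] at hp'
  have := @Nat.lt_size m i
  have := @Nat.lt_size m j
  omega

theorem uniquelyDetermined_staircase (m : ℕ) : UniquelyDetermined (staircase m) := by
  -- Bit length on `ℕ`, and too long to fit anywhere on the negative integers.
  set a : ℤ → ℤ := fun z => if 0 ≤ z then (z.toNat.size : ℤ) else m + 1
  refine uniquelyDetermined_of_mem_iff_add_le a a m fun p => ?_
  by_cases hp : 0 ≤ p.1 ∧ 0 ≤ p.2
  · obtain ⟨x, y⟩ := p
    obtain ⟨i, rfl⟩ := Int.eq_ofNat_of_zero_le hp.1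
    obtain ⟨j, rfl⟩ := Int.eq_ofNat_of_zero_le hp.2
    simp only [a, natCast_mem_staircase, Nat.cast_nonneg, if_true, Int.toNat_natCast]
    omega
  · have hnot : p ∉ staircase m := fun h => hp (by
      obtain ⟨i, j, rfl⟩ := exists_eq_natCast_of_mem_ofRows h
      simp)
    have ha : ∀ z, 0 ≤ a z := fun z => by simp only [a]; split_ifs <;> positivity
    have hlarge : m < a p.1 + a p.2 := by
      rcases not_and_or.1 hp with h | h
      · have := ha p.2; simp only [a, if_neg h]; omega
      · have := ha p.1; simp only [a, if_neg h]; omega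
    simp only [hnot, false_iff, not_le, hlarge]

theorem card_staircase : #(staircase m) = 2 ^ m + m * 2 ^ (m - 1) := by
  have hterm : ∀ k ∈ range m, 2 ^ k * 2 ^ (m - (k + 1)) = 2 ^ (m - 1) := fun k hk => by
    rw [← pow_add]; congr 1; have := mem_range.1 hk; omega
  rw [staircase, card_ofRows]
  simp only [card_range]
  rw [sum_range_two_pow_size (fun s => 2 ^ (m - s)), sum_congr rfl hterm, sum_const, card_range,
    smul_eq_mul, Nat.sub_zero]

theorem card_staircasePartnerRow (i : ℕ) :
    #(staircasePartnerRow m i) =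
      if i = 0 then 2 ^ (m - 1) else if i < 2 ^ m then 2 ^ (m - i.size) else 1 := by
  rw [staircasePartnerRow]
  split_ifs <;> simp [two_mul]

theorem card_staircasePartner (hm : 1 ≤ m) : #(staircasePartner m) = #(staircase m) := by
  have hpow : 2 ^ m = 2 * 2 ^ (m - 1) := by rw [← pow_succ']; congr 1; omega
  have h0 : 0 ∈ range (2 ^ m) := mem_range.2 (by positivity)
  have hmid : ∑ i ∈ (range (2 ^ m)).erase 0, #(staircasePartnerRow m i) =
      ∑ i ∈ (range (2 ^ m)).erase 0, #(range (2 ^ (m - i.size))) := by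
    refine sum_congr rfl fun i hi => ?_
    obtain ⟨hi0, hi⟩ := mem_erase.1 hi
    rw [card_staircasePartnerRow, if_neg hi0, if_pos (mem_range.1 hi), card_range]
  have htail :
      ∑ i ∈ Ico (2 ^ m) (2 ^ m + 2 ^ (m - 1)), #(staircasePartnerRow m i) = 2 ^ (m - 1) := by
    rw [sum_congr rfl fun i hi => by
      rw [card_staircasePartnerRow, if_neg (fun h => by simpa [h] using (mem_Ico.1 hi).1),
        if_neg (not_lt.2 (mem_Ico.1 hi).1)]]
    simp
  rw [staircasePartner, staircase, card_ofRows, card_ofRows,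
    ← sum_range_add_sum_Ico _ le_self_add, ← add_sum_erase _ _ h0, ← add_sum_erase _ _ h0, hmid,
    htail, card_staircasePartnerRow, if_pos rfl, card_range, Nat.size_zero, Nat.sub_zero]
  omega

theorem finsum_abs_sub_rowSum_staircase (hm : 1 ≤ m) :
    ∑ᶠ i, |(rowSum (staircase m) i : ℤ) - rowSum (staircasePartner m) i| = 2 ^ m := by
  have hpow : (2 : ℤ) ^ m = 2 * 2 ^ (m - 1) := by rw [← pow_succ']; congr 1; omega
  have hM : 2 ^ m ≤ 2 ^ m + 2 ^ (m - 1) := le_self_add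
  have hterm : ∀ k ∈ range (2 ^ m + 2 ^ (m - 1)),
      |(rowSum (staircase m) k : ℤ) - rowSum (staircasePartner m) k| =
        if k = 0 then 2 ^ (m - 1) else if 2 ^ m ≤ k then 1 else 0 := by
    intro k hk
    rw [staircase, staircasePartner, rowSum_ofRows_natCast, rowSum_ofRows_natCast,
      card_staircasePartnerRow, if_pos hk]
    simp only [mem_range, card_range]
    split_ifs <;> first | omega | simp_all [two_mul]
  have h0 : 0 ∈ range (2 ^ m) := mem_range.2 (by positivity)
  have htail : ∀ k ∈ Ico (2 ^ m) (2 ^ m + 2 ^ (m - 1)),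
      (if k = 0 then (2 : ℤ) ^ (m - 1) else if 2 ^ m ≤ k then 1 else 0) = 1 := fun k hk => by
    rw [if_neg (fun h => by simpa [h] using (mem_Ico.1 hk).1), if_pos (mem_Ico.1 hk).1]
  rw [staircase, staircasePartner] at hterm ⊢
  rw [finsum_abs_sub_rowSum_ofRows (range_subset_range.2 hM) subset_rfl, sum_congr rfl hterm,
    ← sum_range_add_sum_Ico _ hM, sum_congr rfl htail,
    sum_eq_single_of_mem 0 h0 fun k hk hk0 => by simp [hk0, mem_range.1 hk], if_pos rfl]
  simp [hpow, two_mul]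

end BinaryStaircase

theorem disjoint_example_exists (m : ℕ) (hm : 1 ≤ m) :
    ∃ F1 F2 : Finset (ℤ × ℤ),
      UniquelyDetermined F1 ∧
      F1.card = 2 ^ m + m * 2 ^ (m - 1) ∧
      F2.card = 2 ^ m + m * 2 ^ (m - 1) ∧
      F1 ∩ F2 = ∅ ∧
      lineError F1 F2 = 2 * 2 ^ m := by
  refine ⟨staircase m, staircasePartner m, uniquelyDetermined_staircase m, card_staircase,
    (card_staircasePartner hm).trans card_staircase,
    disjoint_iff_inter_eq_empty.1 disjoint_staircase_staircasePartner, ?_⟩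
  rw [lineError_eq_of_swap_mem (fun _ => swap_mem_staircase) (fun _ => swap_mem_staircasePartner),
    finsum_abs_sub_rowSum_staircase hm]
end
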